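/- arXiv:2605.17067 — 6 statements merged into one kernel-verified Lean document; each statement's English description precedes it below -/
import Mathlib

section
/- Let U and G be n×n complex unitary matrices. Suppose there exists φ ∈ (0, π) such that every eigenvalue of U can be written as e^{iθ} with θ ∈ [−π+φ, π−φ], and suppose ‖G − U‖ ≤ ε₀ where 0 ≤ ε₀ < 2·sin(φ/2). Then every eigenvalue of G can be written as e^{iψ} with |ψ| ≤ π − (φ − 2·arcsin(ε₀/2)); in particular, −1 is not an eigenvalue of G. -/
/-!
Since `U` is normal, `‖(z - U)⁻¹‖` is the reciprocal of the distance from `z` to the spectrum of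
`U`, so a Neumann series shows that every eigenvalue `z` of `G` lies within `‖G - U‖ ≤ ε₀` of an
eigenvalue `e^{iθ}` of `U` (Bauer–Fike for normal operators). Both lie on the unit circle, where a
chord of length at most `ε₀` spans an arc of angle at most `2 arcsin (ε₀ / 2)`, which is `< φ`;
so the phase of `z` differs from `θ` by at most that much and stays strictly inside `(-π, π)`.
-/

open scoped Matrix.Norms.L2Operator
open Real

namespace Real

theorem le_of_sin_le_sin_of_lt_pi_sub {x α : ℝ} (hα : -(π / 2) ≤ α) (hx : x < π - α)
    (h : sin x ≤ sin α) : x ≤ α := by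
  by_contra! hαx
  -- the smaller of `x` and `π - x` has the same sine and lies in `(α, π / 2]`, where `sin` increases
  rcases le_total x (π - x) with hx' | hx'
  · exact (sin_lt_sin_of_lt_of_le_pi_div_two hα (by linarith) hαx).not_ge h
  · rw [← sin_pi_sub] at h
    exact (sin_lt_sin_of_lt_of_le_pi_div_two hα (by linarith) (by linarith)).not_ge h

theorem abs_le_of_abs_sin_le_sin {x α : ℝ} (hα : -(π / 2) ≤ α) (hx : |x| < π - α)
    (h : |sin x| ≤ sin α) : |x| ≤ α := by
  rw [abs_lt] at hx
  rw [abs_le] at h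
  rw [abs_le]
  constructor
  · have := le_of_sin_le_sin_of_lt_pi_sub hα (x := -x) (by linarith) (by rw [sin_neg]; linarith)
    linarith
  · exact le_of_sin_le_sin_of_lt_pi_sub hα hx.2 h.2

theorem two_mul_arcsin_half_lt {φ ε : ℝ} (hφ₀ : 0 ≤ φ) (hφπ : φ ≤ π)
    (hε : ε < 2 * sin (φ / 2)) : 2 * arcsin (ε / 2) < φ := by
  have := (arcsin_lt_iff_lt_sin' (x := ε / 2) (y := φ / 2)
    ⟨by linarith [pi_pos], by linarith⟩).2 (by linarith)
  linarith

end Real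

namespace Complex

theorem norm_exp_ofReal_mul_I_sub_exp_ofReal_mul_I (x y : ℝ) :
    ‖exp (x * I) - exp (y * I)‖ = 2 * |Real.sin ((x - y) / 2)| := by
  have : exp (x * I) - exp (y * I) = exp (y * I) * (exp (I * (x - y : ℝ)) - 1) := by
    rw [mul_sub, mul_one, ← exp_add]
    push_cast
    ring_nf
  rw [this, norm_mul, norm_exp_ofReal_mul_I, one_mul, norm_exp_I_mul_ofReal_sub_one, norm_mul,
    Real.norm_eq_abs, Real.norm_eq_abs, abs_two]

theorem exp_arg_mul_I_of_norm_eq_one {z : ℂ} (hz : ‖z‖ = 1) : exp (arg z * I) = z := by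
  simpa [hz] using norm_mul_exp_arg_mul_I z

theorem abs_arg_le_of_norm_sub_exp_le {z : ℂ} {θ φ ε : ℝ} (hz : ‖z‖ = 1) (hφ₀ : 0 ≤ φ)
    (hφπ : φ ≤ π) (hθ : |θ| ≤ π - φ) (hε : ε < 2 * Real.sin (φ / 2))
    (h : ‖z - exp (θ * I)‖ ≤ ε) : |arg z| ≤ π - (φ - 2 * Real.arcsin (ε / 2)) := by
  rw [← exp_arg_mul_I_of_norm_eq_one hz, norm_exp_ofReal_mul_I_sub_exp_ofReal_mul_I] at h
  have hε_nonneg : 0 ≤ ε / 2 := by linarith [abs_nonneg (Real.sin ((arg z - θ) / 2))]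
  have hα := Real.two_mul_arcsin_half_lt hφ₀ hφπ hε
  have hδ : |(arg z - θ) / 2| ≤ Real.arcsin (ε / 2) := by
    refine Real.abs_le_of_abs_sin_le_sin (Real.neg_pi_div_two_le_arcsin _) ?_ ?_
    · rw [abs_div, abs_two]
      linarith [abs_sub (arg z) θ, abs_arg_le_pi z]
    · rw [Real.sin_arcsin (by linarith) (by linarith [Real.sin_le_one (φ / 2)])]
      linarith
  rw [abs_div, abs_two] at hδ
  linarith [abs_sub_abs_le_abs_sub (arg z) θ]

end Complex

namespace IsStarNormal

variable {A : Type*} [CStarAlgebra A] {a : A} [IsStarNormal a]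

theorem notMem_spectrum_of_norm_sub_lt {b : A} {z : ℂ} {d : ℝ}
    (hd : ∀ μ ∈ spectrum ℂ a, d ≤ ‖z - μ‖) (hb : ‖b - a‖ < d) : z ∉ spectrum ℂ b := by
  have hd₀ : 0 < d := (norm_nonneg _).trans_lt hb
  have hza : ∀ μ ∈ spectrum ℂ a, z - μ ≠ 0 := fun μ hμ =>
    norm_pos_iff.1 (hd₀.trans_le (hd μ hμ))
  set u := cfcUnits (fun μ => z - μ) a hza
  have hu : (u : A) = algebraMap ℂ A z - a := by
    show cfc (fun μ => z - μ) a = _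
    rw [cfc_sub (fun _ => z) (fun μ => μ) a, cfc_const z a, cfc_id' ℂ a]
  have hu_inv : ‖(↑u⁻¹ : A)‖ ≤ d⁻¹ := by
    refine norm_cfc_le (by positivity) fun μ hμ => ?_
    rw [norm_inv]
    exact inv_anti₀ hd₀ (hd μ hμ)
  have hsmall : ‖(↑u⁻¹ : A) * (b - a)‖ < 1 := calc
    _ ≤ ‖(↑u⁻¹ : A)‖ * ‖b - a‖ := norm_mul_le _ _
    _ ≤ d⁻¹ * ‖b - a‖ := by gcongr
    _ < d⁻¹ * d := by gcongr
    _ = 1 := inv_mul_cancel₀ hd₀.ne'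
  have hfac : algebraMap ℂ A z - b = u * (1 - ↑u⁻¹ * (b - a)) := by
    rw [mul_sub, mul_one, ← mul_assoc, Units.mul_inv, one_mul, hu]
    abel
  rw [spectrum.mem_iff, not_not, hfac]
  exact u.isUnit.mul (Units.oneSub _ hsmall).isUnit

theorem exists_mem_spectrum_norm_sub_le {b : A} {z : ℂ} (hz : z ∈ spectrum ℂ b) :
    ∃ μ ∈ spectrum ℂ a, ‖z - μ‖ ≤ ‖b - a‖ := by
  cases subsingleton_or_nontrivial A
  · simp [spectrum.of_subsingleton] at hz
  obtain ⟨μ, hμ, hmin⟩ := (spectrum.isCompact a).exists_isMinOn (spectrum.nonempty a)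
    (continuous_const.sub continuous_id).norm.continuousOn
  exact ⟨μ, hμ, not_lt.1 fun h => notMem_spectrum_of_norm_sub_lt (fun ν hν => hmin hν) h hz⟩

end IsStarNormal

theorem stmt_0_general {n : ℕ} (U G : Matrix (Fin n) (Fin n) ℂ)
    (hU : U ∈ Matrix.unitaryGroup (Fin n) ℂ) (hG : G ∈ Matrix.unitaryGroup (Fin n) ℂ)
    (φ : ℝ) (hφ : φ ∈ Set.Ioo 0 π)
    (hspecU : ∀ z ∈ spectrum ℂ U, ∃ θ : ℝ,
      θ ∈ Set.Icc (-π + φ) (π - φ) ∧ z = Complex.exp (θ * Complex.I))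
    (ε₀ : ℝ) (hε₀' : ε₀ < 2 * Real.sin (φ / 2))
    (hGU : ‖G - U‖ ≤ ε₀) :
    (∀ z ∈ spectrum ℂ G, ∃ ψ : ℝ,
      |ψ| ≤ π - (φ - 2 * Real.arcsin (ε₀ / 2)) ∧ z = Complex.exp (ψ * Complex.I)) ∧
    (-1 : ℂ) ∉ spectrum ℂ G := by
  have : IsStarNormal U := isStarNormal_of_mem_unitary hU
  have hbound : ∀ z ∈ spectrum ℂ G, |z.arg| ≤ π - (φ - 2 * Real.arcsin (ε₀ / 2)) := by
    intro z hz
    obtain ⟨μ, hμ, hzμ⟩ := IsStarNormal.exists_mem_spectrum_norm_sub_le (a := U) hz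
    obtain ⟨θ, ⟨hθ₁, hθ₂⟩, rfl⟩ := hspecU μ hμ
    exact Complex.abs_arg_le_of_norm_sub_exp_le (spectrum.norm_eq_one_of_unitary hG hz)
      hφ.1.le hφ.2.le (abs_le.2 ⟨by linarith, hθ₂⟩) hε₀' (hzμ.trans hGU)
  refine ⟨fun z hz => ⟨z.arg, hbound z hz, ?_⟩, fun h => ?_⟩
  · exact (Complex.exp_arg_mul_I_of_norm_eq_one (spectrum.norm_eq_one_of_unitary hG hz)).symm
  · have := hbound _ h
    rw [Complex.arg_neg_one, abs_of_pos pi_pos] at this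
    linarith [Real.two_mul_arcsin_half_lt hφ.1.le hφ.2.le hε₀']

/-- Spectral stability of unitaries: if every eigenvalue of the unitary `U` has phase in
`[-π+φ, π-φ]` and `‖G - U‖ ≤ ε₀ < 2 sin(φ/2)` for a unitary `G`, then every eigenvalue of `G`
has phase of absolute value at most `π - (φ - 2 arcsin(ε₀/2))`; in particular `-1` is not an
eigenvalue of `G`. -/
theorem stmt_0 {n : ℕ} (U G : Matrix (Fin n) (Fin n) ℂ)
    (hU : U ∈ Matrix.unitaryGroup (Fin n) ℂ) (hG : G ∈ Matrix.unitaryGroup (Fin n) ℂ)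
    (φ : ℝ) (hφ : φ ∈ Set.Ioo 0 π)
    (hspecU : ∀ z ∈ spectrum ℂ U, ∃ θ : ℝ,
      θ ∈ Set.Icc (-π + φ) (π - φ) ∧ z = Complex.exp (θ * Complex.I))
    (ε₀ : ℝ) (hε₀ : 0 ≤ ε₀) (hε₀' : ε₀ < 2 * Real.sin (φ / 2))
    (hGU : ‖G - U‖ ≤ ε₀) :
    (∀ z ∈ spectrum ℂ G, ∃ ψ : ℝ,
      |ψ| ≤ π - (φ - 2 * Real.arcsin (ε₀ / 2)) ∧ z = Complex.exp (ψ * Complex.I)) ∧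
    (-1 : ℂ) ∉ spectrum ℂ G :=
  stmt_0_general U G hU hG φ hφ hspecU ε₀ hε₀' hGU
end

section
/- Let X₁, …, X_m be n×n Hermitian complex matrices with ∑_{j=1}^m ‖X_j‖ < π. Then there exists a Hermitian matrix Z with ‖Z‖ ≤ ∑_{j=1}^m ‖X_j‖ such that exp(−i·Z) = exp(−i·X₁)·exp(−i·X₂)···exp(−i·X_m). -/
open scoped Matrix.Norms.L2Operator
open Real

/-
Each factor `exp(-i X_j)` is a unitary whose spectrum lies in the arc `{e^{iθ} : |θ| ≤ ‖X_j‖}`.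
Multiplying a unitary `v` by a unitary `u` moves every spectral value by at most `‖u - 1‖`
(the spectrum of a normal element is stable under perturbations of that size), and a unitary
with spectrum in the arc of half-width `a ≤ π` satisfies `‖u - 1‖ ≤ 2 sin (a / 2)`, the chord of
that arc; so the arcs add up and the spectrum of the product lies in the arc of half-width
`s = ∑ ‖X_j‖ < π`. Such a unitary avoids `-1` and its principal logarithm, taken by the
continuous functional calculus, gives `Z` with `‖Z‖ ≤ s`.
-/

theorem Real.abs_sin_eq_sin_abs {x : ℝ} (hx : |x| ≤ π) : |Real.sin x| = Real.sin |x| := by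
  rcases abs_cases x with ⟨h, hx0⟩ | ⟨h, hx0⟩ <;> rw [h] at hx ⊢
  · exact abs_of_nonneg (Real.sin_nonneg_of_nonneg_of_le_pi hx0 hx)
  · rw [Real.sin_neg, abs_of_nonpos (Real.sin_nonpos_of_nonpos_of_neg_pi_le hx0.le (by linarith))]

theorem Real.pi_le_abs_of_notMem_Ioc {x : ℝ} (hx : x ∉ Set.Ioc (-π) π) : π ≤ |x| := by
  simp only [Set.mem_Ioc, not_and_or, not_lt, not_le] at hx
  rcases hx with hx | hx
  · exact le_abs.mpr (Or.inr (by linarith))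
  · exact le_abs.mpr (Or.inl hx.le)

namespace Complex

theorem abs_arg_exp_ofReal_mul_I_le (θ : ℝ) : |arg (exp (θ * I))| ≤ |θ| := by
  by_cases hθ : θ ∈ Set.Ioc (-π) π
  · rw [arg_exp_mul_I, (toIocMod_eq_self _).mpr (by simpa [two_mul, ← add_assoc] using hθ)]
  · exact (abs_arg_le_pi _).trans (Real.pi_le_abs_of_notMem_Ioc hθ)

theorem norm_sub_one_eq_two_mul_sin_abs_arg {z : ℂ} (hz : ‖z‖ = 1) :
    ‖z - 1‖ = 2 * Real.sin (|arg z| / 2) := by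
  have hz_exp : exp (I * arg z) = z := by
    simpa [hz, mul_comm] using norm_mul_exp_arg_mul_I z
  have h_half : |arg z / 2| ≤ π := by
    rw [abs_div, abs_two]; linarith [abs_arg_le_pi z, pi_pos]
  conv_lhs => rw [← hz_exp]
  rw [norm_exp_I_mul_ofReal_sub_one, norm_mul, Real.norm_eq_abs, Real.norm_eq_abs,
    abs_sin_eq_sin_abs h_half, abs_div, abs_two]

theorem abs_arg_le_of_norm_sub_one_le {z : ℂ} (hz : ‖z‖ = 1) {a : ℝ} (ha₀ : 0 ≤ a) (haπ : a ≤ π)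
    (h : ‖z - 1‖ ≤ 2 * Real.sin (a / 2)) : |arg z| ≤ a := by
  rw [norm_sub_one_eq_two_mul_sin_abs_arg hz] at h
  have hmem : ∀ {x}, 0 ≤ x → x ≤ π → x / 2 ∈ Set.Icc (-(π / 2)) (π / 2) := fun h₀ h₁ =>
    ⟨by linarith, by linarith⟩
  have := (strictMonoOn_sin.le_iff_le (hmem (abs_nonneg _) (abs_arg_le_pi z))
    (hmem ha₀ haπ)).mp (by linarith)
  linarith

theorem abs_arg_mul_le {x y : ℂ} (hx : x ≠ 0) (hy : y ≠ 0) :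
    |arg (x * y)| ≤ |arg x| + |arg y| := by
  by_cases h : arg x + arg y ∈ Set.Ioc (-π) π
  · rw [arg_mul hx hy h]
    exact abs_add_le _ _
  · linarith [Real.pi_le_abs_of_notMem_Ioc h, abs_arg_le_pi (x * y), abs_add_le (arg x) (arg y)]

end Complex

section CStarAlgebra

variable {A : Type*} [CStarAlgebra A]

open Complex ComplexConjugate

theorem IsStarNormal.exists_mem_spectrum_norm_sub_le_s5 {a p : A} [IsStarNormal p] {z : ℂ}
    (hz : z ∈ spectrum ℂ a) : ∃ w ∈ spectrum ℂ p, ‖z - w‖ ≤ ‖a - p‖ := by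
  obtain _ | _ := subsingleton_or_nontrivial A
  · simp [spectrum.of_subsingleton] at hz
  by_contra! hfar
  obtain ⟨w₀, hw₀, hmin⟩ := (spectrum.isCompact p).exists_isMinOn (spectrum.nonempty p)
    (f := fun w => ‖z - w‖) (by fun_prop)
  have hd : ‖a - p‖ < ‖z - w₀‖ := hfar w₀ hw₀
  have hd₀ : 0 < ‖z - w₀‖ := (norm_nonneg _).trans_lt hd
  have hz_ne : ∀ w ∈ spectrum ℂ p, z - w ≠ 0 := fun w hw h0 =>
    (norm_nonneg _).not_gt (by simpa [h0] using hfar w hw)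
  have hunit : IsUnit (algebraMap ℂ A z - p) := spectrum.notMem_iff.mp fun hzp =>
    hz_ne z hzp (sub_self z)
  have hcfc : cfc (fun w => z - w) p = algebraMap ℂ A z - p := by
    rw [cfc_sub .., cfc_const z p, cfc_id' ℂ p]
  -- for normal `p`, `‖(z - p)⁻¹‖ = 1 / dist(z, spectrum ℂ p)`
  have hinv : ‖((hunit.unit⁻¹ : Aˣ) : A)‖ ≤ ‖z - w₀‖⁻¹ := by
    rw [← Ring.inverse_unit, IsUnit.unit_spec, ← hcfc, ← cfc_inv _ p hz_ne]
    refine norm_cfc_le (by positivity) fun w hw => ?_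
    rw [norm_inv]
    exact inv_anti₀ hd₀ (hmin hw)
  have hnear : ‖(algebraMap ℂ A z - a) - hunit.unit‖ < ‖((hunit.unit⁻¹ : Aˣ) : A)‖⁻¹ := by
    rw [IsUnit.unit_spec, sub_sub_sub_cancel_left, norm_sub_rev]
    exact hd.trans_le (le_inv_of_le_inv₀ (norm_pos_iff.mpr (Units.ne_zero _)) hinv)
  exact spectrum.mem_iff.mp hz (Units.ofNearby _ _ hnear).isUnit

theorem IsSelfAdjoint.spectrum_exp_I_smul_subset {x : A} (hx : IsSelfAdjoint x) :
    spectrum ℂ (NormedSpace.exp (I • x)) ⊆ {z | |arg z| ≤ ‖x‖} := by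
  nontriviality A
  have := hx.isStarNormal
  rw [← CFC.exp_eq_normedSpace_exp (𝕜 := ℂ), ← cfc_comp_smul .., cfc_map_spectrum ..]
  rintro _ ⟨t, ht, rfl⟩
  have ht_le := spectrum.norm_le_norm_of_mem ht
  rw [hx.mem_spectrum_eq_re ht, norm_real, Real.norm_eq_abs] at ht_le
  rw [hx.mem_spectrum_eq_re ht]
  simpa [← Complex.exp_eq_exp_ℂ, mul_comm I] using (abs_arg_exp_ofReal_mul_I_le t.re).trans ht_le

theorem Unitary.norm_sub_one_le_of_spectrum_subset {u : A} (hu : u ∈ unitary A) {a : ℝ}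
    (ha₀ : 0 ≤ a) (haπ : a ≤ π) (h : spectrum ℂ u ⊆ {z | |arg z| ≤ a}) :
    ‖u - 1‖ ≤ 2 * Real.sin (a / 2) := by
  have : IsStarNormal u := isStarNormal_of_mem_unitary hu
  rw [← cfc_id' ℂ u, ← cfc_const_one ℂ u, ← cfc_sub ..]
  have h_sin : 0 ≤ Real.sin (a / 2) :=
    Real.sin_nonneg_of_nonneg_of_le_pi (by linarith) (by linarith)
  refine norm_cfc_le (by positivity) fun z hz => ?_
  rw [norm_sub_one_eq_two_mul_sin_abs_arg (spectrum.norm_eq_one_of_unitary hu hz)]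
  have : |arg z| ≤ a := h hz
  gcongr
  exact Real.sin_le_sin_of_le_of_le_pi_div_two (by linarith [abs_nonneg (arg z)])
    (by linarith) (by linarith)

theorem Unitary.spectrum_mul_subset {u v : A} (hu : u ∈ unitary A) (hv : v ∈ unitary A)
    {a b : ℝ} (hua : spectrum ℂ u ⊆ {z | |arg z| ≤ a}) (hvb : spectrum ℂ v ⊆ {z | |arg z| ≤ b}) :
    spectrum ℂ (u * v) ⊆ {z | |arg z| ≤ a + b} := by
  intro z hz
  show |arg z| ≤ a + b
  obtain _ | _ := subsingleton_or_nontrivial A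
  · simp [spectrum.of_subsingleton] at hz
  have : IsStarNormal v := isStarNormal_of_mem_unitary hv
  obtain ⟨w, hw, hzw⟩ := IsStarNormal.exists_mem_spectrum_norm_sub_le_s5 (p := v) hz
  have hw_b : |arg w| ≤ b := hvb hw
  have hz₁ : ‖z‖ = 1 := spectrum.norm_eq_one_of_unitary (mul_mem hu hv) hz
  have hw₁ : ‖w‖ = 1 := spectrum.norm_eq_one_of_unitary hv hw
  rcases le_or_gt π a with haπ | haπ
  · linarith [abs_arg_le_pi z, abs_nonneg (arg w)]
  have ha₀ : 0 ≤ a := (abs_nonneg _).trans (hua (spectrum.nonempty u).some_mem)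
  -- `z = (z * conj w) * w`, and `z * conj w` is within `‖u - 1‖` of `1`
  have hw_conj : w * conj w = 1 := by
    rw [mul_conj, normSq_eq_norm_sq, hw₁]; norm_num
  have hzw_one : ‖z * conj w - 1‖ ≤ 2 * Real.sin (a / 2) := calc
    ‖z * conj w - 1‖ = ‖z - w‖ := by
      rw [← hw_conj, ← sub_mul, norm_mul, norm_conj, hw₁, mul_one]
    _ ≤ ‖u * v - v‖ := hzw
    _ = ‖u - 1‖ := by rw [← sub_one_mul, CStarRing.norm_mul_mem_unitary _ hv]
    _ ≤ 2 * Real.sin (a / 2) := Unitary.norm_sub_one_le_of_spectrum_subset hu ha₀ haπ.le hua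
  have h_arg := abs_arg_le_of_norm_sub_one_le (by simp [hz₁, hw₁]) ha₀ haπ.le hzw_one
  have hz_eq : z = z * conj w * w := by rw [mul_assoc, mul_comm (conj w), hw_conj, mul_one]
  have := abs_arg_mul_le (norm_ne_zero_iff.mp (by simp [hz₁, hw₁] : ‖z * conj w‖ ≠ 0))
    (norm_ne_zero_iff.mp (by simp [hw₁] : ‖w‖ ≠ 0))
  rw [← hz_eq] at this
  linarith

theorem Unitary.spectrum_ofFn_prod_subset {m : ℕ} {V : Fin m → A} (hV : ∀ j, V j ∈ unitary A)
    {a : Fin m → ℝ} (ha : ∀ j, spectrum ℂ (V j) ⊆ {z | |arg z| ≤ a j}) :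
    spectrum ℂ (List.ofFn V).prod ⊆ {z | |arg z| ≤ ∑ j, a j} := by
  induction m with
  | zero =>
    obtain _ | _ := subsingleton_or_nontrivial A
    · simp [spectrum.of_subsingleton]
    · simp [spectrum.one_eq]
  | succ m ih =>
    rw [List.ofFn_succ, List.prod_cons, Fin.sum_univ_succ]
    exact Unitary.spectrum_mul_subset (hV 0)
      (list_prod_mem (List.forall_mem_ofFn_iff.mpr fun j => hV j.succ)) (ha 0)
      (ih (fun j => hV j.succ) (fun j => ha j.succ))

theorem Unitary.exists_isSelfAdjoint_exp_neg_I_smul_eq {u : A} (hu : u ∈ unitary A) {s : ℝ}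
    (hs₀ : 0 ≤ s) (hsπ : s < π) (h : spectrum ℂ u ⊆ {z | |arg z| ≤ s}) :
    ∃ Z : A, IsSelfAdjoint Z ∧ ‖Z‖ ≤ s ∧ NormedSpace.exp ((-I) • Z) = u := by
  have hu_two : ‖u - 1‖ < 2 := (Unitary.norm_sub_one_lt_two_iff hu).mpr fun h_neg_one => by
    have : |arg (-1)| ≤ s := h h_neg_one
    rw [arg_neg_one, abs_of_pos pi_pos] at this
    linarith
  set x := Unitary.argSelfAdjoint ⟨u, hu⟩
  refine ⟨-x, x.2.neg, ?_, ?_⟩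
  · rw [norm_neg, Unitary.argSelfAdjoint_coe]
    exact norm_cfc_le hs₀ fun z hz => by simpa using h hz
  · rw [neg_smul_neg, ← selfAdjoint.expUnitary_coe, expUnitary_argSelfAdjoint hu_two]

end CStarAlgebra

/-- Magnus-expansion norm bound: if `X 1, …, X m` are Hermitian with `∑ ‖X j‖ < π`, then
the ordered product `exp(-i·X 1) ⋯ exp(-i·X m)` equals `exp(-i·Z)` for some Hermitian `Z`
with `‖Z‖ ≤ ∑ ‖X j‖`. -/
theorem stmt_5 {n m : ℕ} (X : Fin m → Matrix (Fin n) (Fin n) ℂ)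
    (hX : ∀ j, (X j).IsHermitian)
    (hsum : ∑ j, ‖X j‖ < π) :
    ∃ Z : Matrix (Fin n) (Fin n) ℂ, Z.IsHermitian ∧ ‖Z‖ ≤ ∑ j, ‖X j‖ ∧
      NormedSpace.exp ((-Complex.I) • Z)
        = (List.ofFn fun j => NormedSpace.exp ((-Complex.I) • X j)).prod := by
  have hexp : ∀ j, NormedSpace.exp ((-Complex.I) • X j) = NormedSpace.exp (Complex.I • -X j) :=
    fun j => by rw [neg_smul, smul_neg]
  have hunitary : ∀ j, NormedSpace.exp ((-Complex.I) • X j) ∈ unitary _ := fun j =>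
    hexp j ▸ (selfAdjoint.expUnitary ⟨-X j, (hX j).isSelfAdjoint.neg⟩).2
  have harc : ∀ j, spectrum ℂ (NormedSpace.exp ((-Complex.I) • X j)) ⊆
      {z | |z.arg| ≤ ‖X j‖} := fun j => by
    simpa [hexp j] using (hX j).isSelfAdjoint.neg.spectrum_exp_I_smul_subset
  obtain ⟨Z, hZ, hZ_norm, hZ_exp⟩ := Unitary.exists_isSelfAdjoint_exp_neg_I_smul_eq
    (list_prod_mem (List.forall_mem_ofFn_iff.mpr hunitary)) (by positivity) hsum
    (Unitary.spectrum_ofFn_prod_subset hunitary harc)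
  exact ⟨Z, Matrix.isHermitian_iff_isSelfAdjoint.mpr hZ, hZ_norm, hZ_exp⟩
end

section
/- For every dimension n and every φ ∈ (0, π) there exists a constant C > 0 such that for all n×n Hermitian complex matrices A and B with ‖A‖ ≤ π − φ and ‖B‖ ≤ π − φ, one has ‖A − B‖ ≤ C·‖exp(−i·A) − exp(−i·B)‖. -/
/-!
Diagonalize `A = U diag(a) U*` and `B = V diag(b) V*`. Multiplying by `U*` on the left and by `V`
on the right preserves the operator norm and turns `A - B` and `exp(-iA) - exp(-iB)` into the
matrices with entries `(a j - b k) R j k` and `(exp(-i a j) - exp(-i b k)) R j k`, where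
`R = U* V`. The eigenvalues lie in `[φ - π, π - φ]`, so `|exp(-ix) - exp(-iy)| = 2 sin(|x - y|/2)`
with `|x - y|/2 ≤ π - φ`, and concavity of `sin` on `[0, π]` bounds this below by
`sin φ / (π - φ) · |x - y|`. Hence the first matrix is entrywise dominated by a multiple of the
second, and entrywise domination controls the operator norm up to the factor `n²`.
-/

open scoped Matrix.Norms.L2Operator Complex
open Real Matrix Unitary
open Complex (I)

lemma Real.sin_div_mul_le_sin {a t : ℝ} (haπ : a ≤ π) (ht : 0 ≤ t) (hta : t ≤ a) :
    sin a / a * t ≤ sin t := by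
  rcases ht.eq_or_lt with rfl | ht
  · simp
  have ha := ht.trans_le hta
  have h := strictConcaveOn_sin_Icc.concaveOn.slope_anti (x := 0) ⟨le_rfl, pi_pos.le⟩
    ⟨⟨ht.le, hta.trans haπ⟩, ht.ne'⟩ ⟨⟨ha.le, haπ⟩, ha.ne'⟩ hta
  simp only [slope_def_field, sub_zero, Real.sin_zero] at h
  rwa [le_div_iff₀ ht] at h

lemma Complex.norm_exp_neg_I_mul_sub (x y : ℝ) :
    ‖cexp (-I * x) - cexp (-I * y)‖ = 2 * |Real.sin ((x - y) / 2)| := by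
  have h : cexp (-I * x) - cexp (-I * y) = cexp (-I * y) * (cexp (I * ↑(y - x)) - 1) := by
    rw [mul_sub, mul_one, ← Complex.exp_add]; push_cast; ring_nf
  rw [h, norm_mul, Complex.norm_exp_I_mul_ofReal_sub_one, ← neg_sub x y, neg_div, Real.sin_neg]
  simp [Complex.norm_exp]

lemma mul_abs_sub_le_norm_exp_sub {φ x y : ℝ} (hφ : 0 ≤ φ) (hx : |x| ≤ π - φ)
    (hy : |y| ≤ π - φ) :
    sin φ / (π - φ) * |x - y| ≤ ‖cexp (-I * x) - cexp (-I * y)‖ := by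
  have hxy : |(x - y) / 2| ≤ π - φ := by
    rw [abs_div, abs_two, div_le_iff₀ two_pos]
    linarith [abs_sub x y]
  rw [Complex.norm_exp_neg_I_mul_sub, abs_sin_eq_sin_abs_of_abs_le_pi (by linarith),
    ← Real.sin_pi_sub φ]
  have := Real.sin_div_mul_le_sin (by linarith) (abs_nonneg _) hxy
  rw [abs_div, abs_two] at this ⊢
  linarith

namespace Matrix

variable {𝕜 m n ι : Type*} [RCLike 𝕜] [Fintype m] [Fintype n] [DecidableEq n]
  [Fintype ι] [DecidableEq ι]

lemma norm_apply_le_l2_opNorm (X : Matrix m n 𝕜) (i : m) (j : n) : ‖X i j‖ ≤ ‖X‖ :=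
  calc ‖X i j‖ = ‖(EuclideanSpace.equiv m 𝕜).symm (X *ᵥ EuclideanSpace.single j 1) i‖ := by simp
    _ ≤ ‖(EuclideanSpace.equiv m 𝕜).symm (X *ᵥ EuclideanSpace.single j 1)‖ :=
      PiLp.norm_apply_le _ _
    _ ≤ ‖X‖ * ‖EuclideanSpace.single j (1 : 𝕜)‖ := X.l2_opNorm_mulVec _
    _ = ‖X‖ := by simp

lemma l2_opNorm_single_one_le (i j : ι) : ‖(single i j 1 : Matrix ι ι 𝕜)‖ ≤ 1 := by
  have h : (single i j 1 : Matrix ι ι 𝕜)ᴴ * single i j 1 = diagonal (Pi.single j 1) := by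
    rw [conjTranspose_single, star_one, single_mul_single_same, one_mul, diagonal_single]
  have h2 : ‖(single i j 1 : Matrix ι ι 𝕜)‖ * ‖(single i j 1 : Matrix ι ι 𝕜)‖ ≤ 1 := by
    rw [← l2_opNorm_conjTranspose_mul_self, h, l2_opNorm_diagonal]
    exact (Pi.norm_single _).trans_le norm_one.le
  nlinarith [norm_nonneg (single i j 1 : Matrix ι ι 𝕜)]

lemma l2_opNorm_le_sum_norm_apply (X : Matrix ι ι 𝕜) : ‖X‖ ≤ ∑ i, ∑ j, ‖X i j‖ := by
  conv_lhs => rw [matrix_eq_sum_single X]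
  refine (norm_sum_le _ _).trans (Finset.sum_le_sum fun i _ => (norm_sum_le _ _).trans
    (Finset.sum_le_sum fun j _ => ?_))
  rw [show single i j (X i j) = X i j • single i j 1 by simp]
  exact (norm_smul_le _ _).trans
    (mul_le_of_le_one_right (norm_nonneg _) (l2_opNorm_single_one_le i j))

lemma l2_opNorm_le_of_norm_apply_le {X Y : Matrix ι ι 𝕜} {K : ℝ} (hK : 0 ≤ K)
    (h : ∀ i j, ‖X i j‖ ≤ K * ‖Y i j‖) : ‖X‖ ≤ K * Fintype.card ι ^ 2 * ‖Y‖ :=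
  calc ‖X‖ ≤ ∑ i, ∑ j, ‖X i j‖ := l2_opNorm_le_sum_norm_apply X
    _ ≤ ∑ i : ι, ∑ j : ι, K * ‖Y‖ := by
      gcongr with i _ j _
      exact (h i j).trans (by gcongr; exact norm_apply_le_l2_opNorm Y i j)
    _ = K * Fintype.card ι ^ 2 * ‖Y‖ := by simp [Finset.card_univ]; ring

lemma l2_opNorm_star_mul_mul (A : Matrix ι ι 𝕜) (u v : unitary (Matrix ι ι 𝕜)) :
    ‖(star u : Matrix ι ι 𝕜) * A * v‖ = ‖A‖ := by
  rw [CStarRing.norm_mul_coe_unitary, ← Unitary.coe_star, CStarRing.norm_coe_unitary_mul]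

lemma star_mul_sub_mul_apply {A B : Matrix ι ι 𝕜} {u v : unitary (Matrix ι ι 𝕜)}
    {d e : ι → 𝕜} (hA : A = conjStarAlgAut 𝕜 _ u (diagonal d))
    (hB : B = conjStarAlgAut 𝕜 _ v (diagonal e)) (i j : ι) :
    ((star u : Matrix ι ι 𝕜) * (A - B) * v) i j
      = (d i - e j) * ((star u : Matrix ι ι 𝕜) * v) i j := by
  have h : (star u : Matrix ι ι 𝕜) * (A - B) * v
      = diagonal d * ((star u : Matrix ι ι 𝕜) * v) - (star u : Matrix ι ι 𝕜) * v * diagonal e := by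
    simp only [hA, hB, conjStarAlgAut_apply, Matrix.mul_sub, Matrix.sub_mul, ← Matrix.mul_assoc,
      SetLike.coe_mem, star_mul_self_of_mem, Matrix.one_mul, sub_right_inj]
    simp only [Matrix.mul_assoc, SetLike.coe_mem, star_mul_self_of_mem, Matrix.mul_one]
  rw [h, sub_apply, diagonal_mul, mul_diagonal]
  ring

lemma exp_conjStarAlgAut (u : unitary (Matrix ι ι ℂ)) (X : Matrix ι ι ℂ) :
    NormedSpace.exp (conjStarAlgAut ℂ _ u X) = conjStarAlgAut ℂ _ u (NormedSpace.exp X) :=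
  exp_units_conj (toUnits u) X

namespace IsHermitian

lemma abs_eigenvalues_le_l2_opNorm {A : Matrix ι ι 𝕜} (hA : A.IsHermitian) (i : ι) :
    |hA.eigenvalues i| ≤ ‖A‖ := by
  have h : ‖A‖ = ‖(RCLike.ofReal ∘ hA.eigenvalues : ι → 𝕜)‖ := by
    conv_lhs => rw [hA.spectral_theorem]
    rw [conjStarAlgAut_apply, ← Unitary.coe_star, CStarRing.norm_mul_coe_unitary,
      CStarRing.norm_coe_unitary_mul, l2_opNorm_diagonal]
  rw [h, ← RCLike.norm_ofReal (K := 𝕜)]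
  exact norm_le_pi_norm (RCLike.ofReal ∘ hA.eigenvalues : ι → 𝕜) i

lemma exp_neg_I_smul {A : Matrix ι ι ℂ} (hA : A.IsHermitian) :
    NormedSpace.exp ((-I) • A) = conjStarAlgAut ℂ _ hA.eigenvectorUnitary
      (diagonal fun i => cexp (-I * hA.eigenvalues i)) := by
  conv_lhs => rw [hA.spectral_theorem]
  rw [← map_smul, exp_conjStarAlgAut, ← diagonal_smul, exp_diagonal]
  congr
  ext i
  simp [Complex.exp_eq_exp_ℂ]

lemma norm_sub_le_of_eigenvalues {A B : Matrix ι ι ℂ} (hA : A.IsHermitian) (hB : B.IsHermitian)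
    {K : ℝ} (hK : 0 ≤ K)
    (h : ∀ i j, |hA.eigenvalues i - hB.eigenvalues j|
      ≤ K * ‖cexp (-I * hA.eigenvalues i) - cexp (-I * hB.eigenvalues j)‖) :
    ‖A - B‖ ≤ K * Fintype.card ι ^ 2 *
      ‖NormedSpace.exp ((-I) • A) - NormedSpace.exp ((-I) • B)‖ := by
  rw [← l2_opNorm_star_mul_mul (A - B) hA.eigenvectorUnitary hB.eigenvectorUnitary,
    ← l2_opNorm_star_mul_mul (_ - _) hA.eigenvectorUnitary hB.eigenvectorUnitary]
  refine l2_opNorm_le_of_norm_apply_le hK fun i j => ?_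
  rw [star_mul_sub_mul_apply hA.spectral_theorem hB.spectral_theorem,
    star_mul_sub_mul_apply hA.exp_neg_I_smul hB.exp_neg_I_smul, norm_mul, norm_mul, ← mul_assoc]
  gcongr
  simpa [← Complex.ofReal_sub] using h i j

end IsHermitian

end Matrix

/-- Local Lipschitz continuity of the principal matrix logarithm: for every dimension `n` and
`φ ∈ (0, π)` there is a constant `C > 0` such that for all Hermitian `A`, `B` with norm at most
`π - φ`, `‖A - B‖ ≤ C·‖exp(-i·A) - exp(-i·B)‖`. -/
theorem stmt_7 (n : ℕ) (φ : ℝ) (hφ : φ ∈ Set.Ioo 0 π) :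
    ∃ C : ℝ, 0 < C ∧ ∀ A B : Matrix (Fin n) (Fin n) ℂ,
      A.IsHermitian → B.IsHermitian → ‖A‖ ≤ π - φ → ‖B‖ ≤ π - φ →
      ‖A - B‖ ≤ C * ‖NormedSpace.exp ((-Complex.I) • A)
        - NormedSpace.exp ((-Complex.I) • B)‖ := by
  obtain ⟨hφ0, hφπ⟩ := hφ
  set c := sin φ / (π - φ)
  have hc : 0 < c := div_pos (sin_pos_of_pos_of_lt_pi hφ0 hφπ) (by linarith)
  refine ⟨c⁻¹ * (n ^ 2 + 1), by positivity, fun A B hA hB hAn hBn => ?_⟩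
  have hAB := hA.norm_sub_le_of_eigenvalues hB (inv_nonneg.2 hc.le) fun i j =>
    (le_inv_mul_iff₀ hc).2 <| mul_abs_sub_le_norm_exp_sub hφ0.le
      ((hA.abs_eigenvalues_le_l2_opNorm i).trans hAn)
      ((hB.abs_eigenvalues_le_l2_opNorm j).trans hBn)
  rw [Fintype.card_fin] at hAB
  exact hAB.trans (by gcongr; linarith)
end

section
/- For all θ, Φ ∈ ℝ, with H_± = cos²Φ·(σX⊗σX) + sin²Φ·(σY⊗σY) ± cosΦ·sinΦ·(σX⊗σY + σY⊗σX), the product B(θ, Φ) = exp(−i·θ·H₊)·exp(−i·θ·H₋) maps the basis vector |01⟩ to cos(2θ)·|01⟩ − i·sin(2θ)·|10⟩ and maps |10⟩ to −i·sin(2θ)·|01⟩ + cos(2θ)·|10⟩. In particular, the restriction of B(θ, Φ) to the odd-parity subspace span{|01⟩, |10⟩} equals exp(−i·2θ·X_odd) and is independent of Φ. -/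
open Kronecker Real

/-!
Write `c = cos Φ`, `s = sin Φ`. By bilinearity of `⊗ₖ`, `H_± = A_± ⊗ₖ A_±` with
`A_± = c σX ± s σY = !![0, c ∓ s i; c ± s i, 0]`, an antidiagonal matrix whose two entries multiply
to `c² + s² = 1`. Hence each `H_±` squares to `1` and swaps `|01⟩` and `|10⟩`. For an involution
`exp (-(iθ) H) = cos θ - i sin θ H`, so on the odd sector each factor acts as `exp (-iθ X_odd)`,
whatever `Φ` is, and their product as `exp (-2iθ X_odd)`.
-/

section

open NormedSpace Matrix Complex

theorem exp_smul_of_mul_self_eq_one {𝔸 : Type*} [Ring 𝔸] [Algebra ℂ 𝔸] [TopologicalSpace 𝔸]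
    [IsTopologicalRing 𝔸] [ContinuousSMul ℂ 𝔸] [T2Space 𝔸] {H : 𝔸} (hH : H * H = 1) (z : ℂ) :
    exp (z • H) = cosh z • 1 + sinh z • H := by
  have hpow : ∀ n : ℕ, H ^ (2 * n) = 1 := fun n => by rw [pow_mul, sq, hH, one_pow]
  rw [exp_eq_tsum ℂ]
  refine HasSum.tsum_eq (HasSum.even_add_odd ?_ ?_)
  · convert (hasSum_cosh z).smul_const (1 : 𝔸) using 2 with n
    rw [smul_pow, hpow, smul_smul, div_eq_inv_mul]
  · convert (hasSum_sinh z).smul_const H using 2 with n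
    rw [smul_pow, pow_succ H, hpow, one_mul, smul_smul, div_eq_inv_mul]

namespace Matrix

section Involution

variable {n : Type*} [Fintype n] [DecidableEq n]

theorem exp_neg_I_mul_smul_mulVec {H : Matrix n n ℂ} (hH : H * H = 1) {v w : n → ℂ}
    (hv : H *ᵥ v = w) (θ : ℝ) :
    exp (-(I * θ) • H) *ᵥ v = (Real.cos θ : ℂ) • v - (I * Real.sin θ) • w := by
  have hcosh : cosh (-(I * θ)) = Real.cos θ := by
    rw [Complex.cosh_neg, mul_comm, cosh_mul_I, ofReal_cos]
  have hsinh : sinh (-(I * θ)) = -(I * Real.sin θ) := by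
    rw [Complex.sinh_neg, mul_comm, sinh_mul_I, ofReal_sin, mul_comm]
  rw [exp_smul_of_mul_self_eq_one hH, hcosh, hsinh, add_mulVec, smul_mulVec, smul_mulVec,
    one_mulVec, hv, neg_smul, ← sub_eq_add_neg]

theorem exp_neg_I_mul_smul_mul_exp_neg_I_mul_smul_mulVec {H K : Matrix n n ℂ}
    (hH : H * H = 1) (hK : K * K = 1) {v w : n → ℂ} (hHv : H *ᵥ v = w) (hHw : H *ᵥ w = v)
    (hKv : K *ᵥ v = w) (θ : ℝ) :
    (exp (-(I * θ) • H) * exp (-(I * θ) • K)) *ᵥ v =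
      (Real.cos (2 * θ) : ℂ) • v - (I * Real.sin (2 * θ)) • w := by
  rw [← mulVec_mulVec, exp_neg_I_mul_smul_mulVec hK hKv, mulVec_sub, mulVec_smul, mulVec_smul,
    exp_neg_I_mul_smul_mulVec hH hHv, exp_neg_I_mul_smul_mulVec hH hHw, Real.cos_two_mul',
    Real.sin_two_mul]
  simp only [ofReal_sub, ofReal_mul, ofReal_pow, ofReal_ofNat]
  generalize (Real.cos θ : ℂ) = c
  generalize (Real.sin θ : ℂ) = s
  match_scalars
  · linear_combination s ^ 2 * I_sq
  · ring

end Involution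

theorem kronecker_self_smul_add_smul {R m p : Type*} [CommRing R] (a b : R) (X Y : Matrix m p R) :
    (a • X + b • Y) ⊗ₖ (a • X + b • Y) =
      (a ^ 2) • (X ⊗ₖ X) + (b ^ 2) • (Y ⊗ₖ Y) + (a * b) • (X ⊗ₖ Y + Y ⊗ₖ X) := by
  simp only [add_kronecker, kronecker_add, smul_kronecker, kronecker_smul, smul_smul, smul_add]
  module

theorem smul_pauliX_add_smul_pauliY (a b : ℂ) :
    a • !![0, 1; 1, 0] + b • !![0, -I; I, 0] = !![0, a - b * I; a + b * I, 0] := by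
  ext i j
  fin_cases i <;> fin_cases j <;> simp [sub_eq_add_neg]

section Antidiagonal

variable {R : Type*} [CommRing R] {u v : R}

theorem antidiagonal_kronecker_self_mul_self (huv : u * v = 1) :
    (!![0, u; v, 0] ⊗ₖ !![0, u; v, 0]) * (!![0, u; v, 0] ⊗ₖ !![0, u; v, 0]) = 1 := by
  have hsq : !![0, u; v, 0] * !![0, u; v, 0] = 1 := by
    ext i j
    fin_cases i <;> fin_cases j <;> simp [huv, mul_comm v u]
  rw [← mul_kronecker_mul, hsq, one_kronecker_one]

theorem antidiagonal_kronecker_self_mulVec_single_zero_one (huv : u * v = 1) :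
    (!![0, u; v, 0] ⊗ₖ !![0, u; v, 0]) *ᵥ Pi.single ((0 : Fin 2), (1 : Fin 2)) 1 =
      Pi.single ((1 : Fin 2), (0 : Fin 2)) 1 := by
  rw [mulVec_single_one]
  ext ⟨i, j⟩
  fin_cases i <;> fin_cases j <;> simp [mul_comm v u, huv]

theorem antidiagonal_kronecker_self_mulVec_single_one_zero (huv : u * v = 1) :
    (!![0, u; v, 0] ⊗ₖ !![0, u; v, 0]) *ᵥ Pi.single ((1 : Fin 2), (0 : Fin 2)) 1 =
      Pi.single ((0 : Fin 2), (1 : Fin 2)) 1 := by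
  rw [mulVec_single_one]
  ext ⟨i, j⟩
  fin_cases i <;> fin_cases j <;> simp [huv]

end Antidiagonal

end Matrix

end

/-- Odd-sector action of the echoed SDF sequence: `B(θ,Φ) = exp(-i·θ·H₊)·exp(-i·θ·H₋)` maps
`|01⟩ ↦ cos(2θ)|01⟩ - i sin(2θ)|10⟩` and `|10⟩ ↦ -i sin(2θ)|01⟩ + cos(2θ)|10⟩`;
in particular its restriction to the odd-parity subspace is `exp(-i·2θ·X_odd)`,
independent of `Φ`. -/
theorem stmt_11 (θ Φ : ℝ)
    (σX σY : Matrix (Fin 2) (Fin 2) ℂ)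
    (hX : σX = !![0, 1; 1, 0]) (hY : σY = !![0, -Complex.I; Complex.I, 0])
    (Hp Hm B : Matrix (Fin 2 × Fin 2) (Fin 2 × Fin 2) ℂ)
    (hHp : Hp = ((Real.cos Φ) ^ 2 : ℂ) • (σX ⊗ₖ σX) + ((Real.sin Φ) ^ 2 : ℂ) • (σY ⊗ₖ σY)
      + ((Real.cos Φ * Real.sin Φ : ℝ) : ℂ) • (σX ⊗ₖ σY + σY ⊗ₖ σX))
    (hHm : Hm = ((Real.cos Φ) ^ 2 : ℂ) • (σX ⊗ₖ σX) + ((Real.sin Φ) ^ 2 : ℂ) • (σY ⊗ₖ σY)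
      - ((Real.cos Φ * Real.sin Φ : ℝ) : ℂ) • (σX ⊗ₖ σY + σY ⊗ₖ σX))
    (hB : B = NormedSpace.exp ((-(Complex.I * (θ : ℂ))) • Hp)
      * NormedSpace.exp ((-(Complex.I * (θ : ℂ))) • Hm))
    (e01 e10 : (Fin 2 × Fin 2) → ℂ)
    (he01 : e01 = Pi.single ((0 : Fin 2), (1 : Fin 2)) 1)
    (he10 : e10 = Pi.single ((1 : Fin 2), (0 : Fin 2)) 1) :
    B.mulVec e01 = (Real.cos (2 * θ) : ℂ) • e01
        - (Complex.I * (Real.sin (2 * θ) : ℂ)) • e10 ∧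
    B.mulVec e10 = -(Complex.I * (Real.sin (2 * θ) : ℂ)) • e01
        + (Real.cos (2 * θ) : ℂ) • e10 := by
  open Matrix Complex in
  subst hX hY hB he01 he10
  set c : ℂ := (Real.cos Φ : ℂ)
  set s : ℂ := (Real.sin Φ : ℂ)
  have hcs : c ^ 2 + s ^ 2 = 1 := by simp only [c, s]; exact_mod_cast Real.cos_sq_add_sin_sq Φ
  have hp : (c - s * I) * (c + s * I) = 1 := by linear_combination hcs - s ^ 2 * I_sq
  have hm : (c - -s * I) * (c + -s * I) = 1 := by linear_combination hp
  have hHp' : Hp = !![0, c - s * I; c + s * I, 0] ⊗ₖ !![0, c - s * I; c + s * I, 0] := by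
    rw [hHp, ← smul_pauliX_add_smul_pauliY, kronecker_self_smul_add_smul, ofReal_mul]
  have hHm' : Hm = !![0, c - -s * I; c + -s * I, 0] ⊗ₖ !![0, c - -s * I; c + -s * I, 0] := by
    rw [hHm, ← smul_pauliX_add_smul_pauliY, kronecker_self_smul_add_smul, neg_sq, mul_neg,
      neg_smul, ← sub_eq_add_neg, ofReal_mul]
  subst hHp' hHm'
  constructor
  · exact exp_neg_I_mul_smul_mul_exp_neg_I_mul_smul_mulVec
      (antidiagonal_kronecker_self_mul_self hp) (antidiagonal_kronecker_self_mul_self hm)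
      (antidiagonal_kronecker_self_mulVec_single_zero_one hp)
      (antidiagonal_kronecker_self_mulVec_single_one_zero hp)
      (antidiagonal_kronecker_self_mulVec_single_zero_one hm) θ
  · rw [neg_smul (I * (Real.sin (2 * θ) : ℂ)), neg_add_eq_sub]
    exact exp_neg_I_mul_smul_mul_exp_neg_I_mul_smul_mulVec
      (antidiagonal_kronecker_self_mul_self hp) (antidiagonal_kronecker_self_mul_self hm)
      (antidiagonal_kronecker_self_mulVec_single_one_zero hp)
      (antidiagonal_kronecker_self_mulVec_single_zero_one hp)
      (antidiagonal_kronecker_self_mulVec_single_one_zero hm) θ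
end

section
/- With θ = 3π/16 and Φ = (1/2)·arccos(√2 − 1), one has sin(2θ)·cos(2Φ) = sin(π/8) and |cos²θ − sin²θ·e^{−4iΦ}| = cos(π/8). -/
/-!
Since `sin(2θ) = sin(3π/8) = cos(π/8)` and `cos(2Φ) = √2 - 1 = tan(π/8)`, the first identity is
`cos(π/8) tan(π/8) = sin(π/8)`. For the second, expanding the modulus gives, for all `θ, Φ`,
`|cos²θ - sin²θ e^{-4iΦ}|² = 1 - 2 sin²θ cos²θ (1 + cos 4Φ) = 1 - (sin 2θ cos 2Φ)²`,
so `|d|² = 1 - sin²(π/8) = cos²(π/8)`.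
-/

open Real

theorem sin_three_pi_div_eight : sin (3 * π / 8) = cos (π / 8) := by
  rw [← sin_pi_div_two_sub]; ring_nf

theorem sin_pi_div_eight_eq_cos_mul : sin (π / 8) = cos (π / 8) * (√2 - 1) := by
  have hcos_pos : 0 < cos (π / 8) :=
    cos_pos_of_mem_Ioo ⟨by linarith [pi_pos], by linarith [pi_pos]⟩
  have hsin_double : 2 * sin (π / 8) * cos (π / 8) = √2 / 2 := by
    rw [← sin_two_mul, ← sin_pi_div_four]; ring_nf
  have hcos_double : 2 * cos (π / 8) ^ 2 - 1 = √2 / 2 := by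
    rw [← cos_two_mul, ← cos_pi_div_four]; ring_nf
  refine mul_right_cancel₀ hcos_pos.ne' ?_
  linear_combination (1 / 2) * hsin_double - (√2 - 1) / 2 * hcos_double
    - (1 / 4) * sq_sqrt (zero_le_two : (0 : ℝ) ≤ 2)

theorem norm_sq_cos_sq_sub_sin_sq_mul_exp (θ Φ : ℝ) :
    ‖((cos θ) ^ 2 : ℂ) - ((sin θ) ^ 2 : ℂ) * Complex.exp (-(4 * (Φ : ℂ)) * Complex.I)‖ ^ 2
      = 1 - (sin (2 * θ) * cos (2 * Φ)) ^ 2 := by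
  have hexp : Complex.exp (-(4 * (Φ : ℂ)) * Complex.I)
      = cos (4 * Φ) - sin (4 * Φ) * Complex.I := by
    rw [show -(4 * (Φ : ℂ)) * Complex.I = ((-(4 * Φ) : ℝ) : ℂ) * Complex.I by push_cast; ring,
      Complex.exp_mul_I, ← Complex.ofReal_cos, ← Complex.ofReal_sin, cos_neg, sin_neg]
    push_cast; ring
  have hcos_four : cos (4 * Φ) = 2 * cos (2 * Φ) ^ 2 - 1 := by
    rw [← cos_two_mul]; ring_nf
  rw [hexp, Complex.sq_norm, Complex.normSq_apply]
  simp only [Complex.sub_re, Complex.sub_im, Complex.mul_re, Complex.mul_im, ← Complex.ofReal_pow,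
    Complex.ofReal_re, Complex.ofReal_im, Complex.I_re, Complex.I_im]
  rw [sin_two_mul θ]
  linear_combination (cos θ ^ 2 + sin θ ^ 2 + 1) * sin_sq_add_cos_sq θ
    + sin θ ^ 4 * sin_sq_add_cos_sq (4 * Φ) - 2 * sin θ ^ 2 * cos θ ^ 2 * hcos_four

/-- Calibration conditions for the B gate: at `θ = 3π/16`, `Φ = ½ arccos(√2 - 1)`, the
even-sector block parameters satisfy `sin(2θ)cos(2Φ) = sin(π/8)` and
`|cos²θ - sin²θ·e^{-4iΦ}| = cos(π/8)`. -/
theorem stmt_14 (θ Φ : ℝ)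
    (hθ : θ = 3 * π / 16) (hΦ : Φ = (1 / 2) * Real.arccos (Real.sqrt 2 - 1)) :
    Real.sin (2 * θ) * Real.cos (2 * Φ) = Real.sin (π / 8) ∧
    ‖(((Real.cos θ) ^ 2 : ℂ)
        - ((Real.sin θ) ^ 2 : ℂ) * Complex.exp (-(4 * (Φ : ℂ)) * Complex.I))‖
      = Real.cos (π / 8) := by
  have hsqrt_two : 1 ≤ √2 ∧ √2 ≤ 2 := ⟨one_le_sqrt.mpr one_le_two, by
    rw [sqrt_le_left zero_le_two]; norm_num⟩
  have ht : sin (2 * θ) * cos (2 * Φ) = sin (π / 8) := by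
    rw [hθ, hΦ, show 2 * (3 * π / 16) = 3 * π / 8 by ring,
      show 2 * (1 / 2 * arccos (√2 - 1)) = arccos (√2 - 1) by ring, sin_three_pi_div_eight, cos_arccos (by linarith) (by linarith), sin_pi_div_eight_eq_cos_mul]
  refine ⟨ht, ?_⟩
  have hnorm_sq := norm_sq_cos_sq_sub_sin_sq_mul_exp θ Φ
  rw [ht, ← cos_sq'] at hnorm_sq
  exact (pow_left_inj₀ (norm_nonneg _)
    (cos_nonneg_of_mem_Icc ⟨by linarith [pi_pos], by linarith [pi_pos]⟩) two_ne_zero).mp hnorm_sq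
end

section
/- Let N ≥ 2 be even. On the space of 2^N × 2^N complex matrices, let K be the Kronecker product over sites i = 0, …, N−1 of σZ at each even site i and the 2×2 identity at each odd site, and for each i let XX_i be the Kronecker product placing σX at sites i and (i+1 mod N) and the identity at every other site. Then K is unitary and Hermitian and K · (∑_{i=0}^{N−1} XX_i) · K = −∑_{i=0}^{N−1} XX_i. -/
/-- The Kronecker (tensor) product over sites `i = 0, …, N-1` of single-site `2×2` matrices,
as a matrix on `2^N`-dimensional space indexed by `Fin N → Fin 2`. -/
noncomputable def siteKron (N : ℕ) (f : Fin N → Matrix (Fin 2) (Fin 2) ℂ) :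
    Matrix (Fin N → Fin 2) (Fin N → Fin 2) ℂ :=
  Matrix.of fun x y => ∏ i, f i (x i) (y i)

/-! On an even periodic chain the sites `i` and `i + 1` have opposite parities, so exactly one
site of each bond carries a `σZ` of `K`. Since `K` is a product of commuting single-site factors,
conjugating `XX_i` by `K` acts site by site, and `σZ σX σZ = -σX` on that one site flips the sign
of `XX_i`, while all other sites are left unchanged because `σZ² = 1`. -/

section Pauli

variable {R : Type*} [Ring R]

lemma pauliZ_mul_self : !![1, 0; 0, (-1 : R)] * !![1, 0; 0, -1] = 1 := by
  simp [← Matrix.one_fin_two]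

lemma pauliZ_mul_pauliX_mul_pauliZ :
    !![1, 0; 0, (-1 : R)] * !![0, 1; 1, 0] * !![1, 0; 0, -1] = -!![0, 1; 1, 0] := by
  simp

lemma pauliZ_isHermitian [StarRing R] : (!![1, 0; 0, (-1 : R)]).IsHermitian := by
  ext i j
  fin_cases i <;> fin_cases j <;> simp

end Pauli

lemma Fin.even_val_add_one_iff {N : ℕ} (h1 : 1 < N) (hN : Even N) (i : Fin N) :
    Even ((i + ⟨1, h1⟩ : Fin N) : ℕ) ↔ ¬Even (i : ℕ) := by
  obtain ⟨m, rfl⟩ := hN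
  have hi := i.isLt
  rw [Fin.val_add]
  rcases lt_or_ge ((i : ℕ) + 1) (m + m) with h | h
  · rw [Nat.mod_eq_of_lt h, Nat.even_add_one]
  · rw [show (i : ℕ) + 1 = m + m by omega, Nat.mod_self, Nat.even_iff, Nat.even_iff]
    omega

lemma Fin.existsUnique_even_of_adjacent {N : ℕ} (h1 : 1 < N) (hN : Even N) (i : Fin N) :
    ∃! j : Fin N, Even (j : ℕ) ∧ (j = i ∨ j = i + ⟨1, h1⟩) := by
  have hpar := Fin.even_val_add_one_iff h1 hN i
  by_cases hi : Even (i : ℕ)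
  · refine ⟨i, ⟨hi, .inl rfl⟩, ?_⟩
    rintro j ⟨hj, rfl | rfl⟩
    · rfl
    · exact absurd hi (hpar.mp hj)
  · refine ⟨i + ⟨1, h1⟩, ⟨hpar.mpr hi, .inr rfl⟩, ?_⟩
    rintro j ⟨hj, rfl | rfl⟩
    · exact absurd hj hi
    · rfl

section siteKron

open scoped Matrix

variable {N : ℕ}

lemma siteKron_mul (f g : Fin N → Matrix (Fin 2) (Fin 2) ℂ) :
    siteKron N f * siteKron N g = siteKron N fun i => f i * g i := by
  ext x y
  simp only [siteKron, Matrix.mul_apply, Matrix.of_apply, Finset.prod_univ_sum,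
    Fintype.piFinset_univ, Finset.prod_mul_distrib]

lemma siteKron_one : siteKron N (fun _ => 1) = 1 := by
  ext x y
  simp only [siteKron, Matrix.of_apply, Matrix.one_apply]
  split_ifs with h
  · simp [h]
  · obtain ⟨i, hi⟩ := Function.ne_iff.mp h
    exact Finset.prod_eq_zero (Finset.mem_univ i) (if_neg hi)

lemma siteKron_conjTranspose (f : Fin N → Matrix (Fin 2) (Fin 2) ℂ) :
    (siteKron N f)ᴴ = siteKron N fun i => (f i)ᴴ := by
  ext x y
  simp [siteKron, star_prod]

lemma siteKron_isHermitian {f : Fin N → Matrix (Fin 2) (Fin 2) ℂ}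
    (hf : ∀ i, (f i).IsHermitian) : (siteKron N f).IsHermitian := by
  rw [Matrix.IsHermitian, siteKron_conjTranspose]
  exact congrArg _ (funext hf)

lemma siteKron_eq_neg_of_eq_neg_at {f g : Fin N → Matrix (Fin 2) (Fin 2) ℂ} (j₀ : Fin N)
    (h₀ : f j₀ = -g j₀) (h : ∀ j, j ≠ j₀ → f j = g j) :
    siteKron N f = -siteKron N g := by
  ext x y
  simp only [siteKron, Matrix.of_apply, Matrix.neg_apply]
  rw [← Finset.prod_erase_mul _ _ (Finset.mem_univ j₀),
    ← Finset.prod_erase_mul _ _ (Finset.mem_univ j₀), h₀,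
    Finset.prod_congr rfl fun j hj => by rw [h j (Finset.ne_of_mem_erase hj)]]
  simp

lemma siteKron_conj_eq_neg {Z X : Matrix (Fin 2) (Fin 2) ℂ} (hZZ : Z * Z = 1)
    (hZXZ : Z * X * Z = -X) (E P : Fin N → Prop) [DecidablePred E] [DecidablePred P]
    (hEP : ∃! j, E j ∧ P j) :
    siteKron N (fun j => if E j then Z else 1) * siteKron N (fun j => if P j then X else 1) *
        siteKron N (fun j => if E j then Z else 1) =
      -siteKron N fun j => if P j then X else 1 := by
  obtain ⟨j₀, ⟨hE, hP⟩, huniq⟩ := hEP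
  rw [siteKron_mul, siteKron_mul]
  refine siteKron_eq_neg_of_eq_neg_at j₀ (by simp [hE, hP, hZXZ]) fun j hj => ?_
  by_cases hEj : E j
  · have hPj : ¬P j := fun hPj => hj (huniq j ⟨hEj, hPj⟩)
    simp [hEj, hPj, hZZ]
  · simp [hEj]

end siteKron

/-- Anti-commuting Pauli string for the periodic nearest-neighbor XX Hamiltonian: with
`K = ⊗_i (σZ at even sites, 𝟙 at odd sites)` and `XX_i` the operator placing `σX` at sites
`i` and `i+1 (mod N)`, `K` is unitary and Hermitian and `K (∑_i XX_i) K = -∑_i XX_i`. -/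
theorem stmt_17 (N : ℕ) (hN : 2 ≤ N) (hNe : Even N)
    (σX σZ : Matrix (Fin 2) (Fin 2) ℂ)
    (hX : σX = !![0, 1; 1, 0]) (hZ : σZ = !![1, 0; 0, -1])
    (K : Matrix (Fin N → Fin 2) (Fin N → Fin 2) ℂ)
    (hK : K = siteKron N fun i => if Even (i : ℕ) then σZ else 1)
    (XX : Fin N → Matrix (Fin N → Fin 2) (Fin N → Fin 2) ℂ)
    (hXX : ∀ i, XX i = siteKron N fun j => if j = i ∨ j = i + ⟨1, by omega⟩ then σX else 1) :
    K ∈ Matrix.unitaryGroup (Fin N → Fin 2) ℂ ∧ K.IsHermitian ∧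
      K * (∑ i, XX i) * K = -∑ i, XX i := by
  have hZZ : σZ * σZ = 1 := hZ ▸ pauliZ_mul_self
  have hKherm : K.IsHermitian := hK ▸ siteKron_isHermitian fun i => by
    split_ifs
    exacts [hZ ▸ pauliZ_isHermitian, Matrix.isHermitian_one]
  have hKK : K * K = 1 := by
    rw [hK, siteKron_mul, ← siteKron_one]
    congr 1 with i
    split_ifs <;> simp [hZZ]
  have hconj (i : Fin N) : K * XX i * K = -XX i := by
    rw [hK, hXX i]
    exact siteKron_conj_eq_neg hZZ (hZ ▸ hX ▸ pauliZ_mul_pauliX_mul_pauliZ) _ _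
      (Fin.existsUnique_even_of_adjacent _ hNe i)
  refine ⟨?_, hKherm, ?_⟩
  · rw [Matrix.mem_unitaryGroup_iff, Matrix.star_eq_conjTranspose, hKherm, hKK]
  · simp only [Finset.mul_sum, Finset.sum_mul, hconj, Finset.sum_neg_distrib]
end
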